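/- arXiv:1912.12307 — 2 statements merged into one kernel-verified Lean document; each statement's English description precedes it below -/
import Mathlib

section
/- Let T and S be symmetric linear operators on E with V := T − S positive semidefinite. Let E0, E1, ε0, ε1, V_U be real numbers and ψ, χ unit vectors in E such that: (i) T ψ = E0 • ψ and re⟪v, T v⟫ ≥ E0·‖v‖² for all v; (ii) E1 is the least element of the set {re⟪v, T v⟫ : ‖v‖ = 1 and ⟪ψ, v⟫ = 0}; (iii) S χ = ε0 • χ and re⟪v, S v⟫ ≥ ε0·‖v‖² for all v; (iv) re⟪v, S v⟫ ≥ ε1 for every unit vector v with ⟪χ, v⟫ = 0; (v) re⟪χ, V χ⟫ ≤ V_U and V_U < ε1 − ε0. Then E1 − E0 ≥ (ε1 − ε0) − V_U and E1 > E0; in particular T has a positive spectral gap above its ground state. -/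
/-!
Testing `T` on `χ` gives `E0 ≤ re⟪χ, T χ⟫ = ε0 + re⟪χ, V χ⟫ ≤ ε0 + V_U`. For the upper level,
let `v` be a unit vector in `ψᗮ` with `re⟪v, T v⟫ = E1`. Since `ψ` is an eigenvector orthogonal
to `v`, the form of `T` is at most `E1 ‖w‖²` on the plane spanned by `ψ` and `v`, and that plane
contains some `w ≠ 0` orthogonal to `χ`; hence `ε1 ‖w‖² ≤ re⟪w, S w⟫ ≤ re⟪w, T w⟫ ≤ E1 ‖w‖²`.
-/

open scoped InnerProductSpace
open RCLike

section

variable {𝕜 E : Type*} [RCLike 𝕜] [NormedAddCommGroup E] [InnerProductSpace 𝕜 E]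

theorem re_inner_smul_map_smul (T : E →ₗ[𝕜] E) (c : 𝕜) (x : E) :
    re ⟪c • x, T (c • x)⟫_𝕜 = ‖c‖ ^ 2 * re ⟪x, T x⟫_𝕜 := by
  rw [map_smul, inner_smul_left, inner_smul_right, ← mul_assoc, RCLike.conj_mul, ← ofReal_pow,
    re_ofReal_mul]

theorem re_inner_map_self_of_eigenvector {T : E →ₗ[𝕜] E} {x : E} {μ : ℝ}
    (hx : T x = (μ : 𝕜) • x) : re ⟪x, T x⟫_𝕜 = μ * ‖x‖ ^ 2 := by
  rw [hx, inner_smul_right, re_ofReal_mul, inner_self_eq_norm_sq]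

theorem re_inner_map_self_eq_add_sub (T S : E →ₗ[𝕜] E) (x : E) :
    re ⟪x, T x⟫_𝕜 = re ⟪x, S x⟫_𝕜 + re ⟪x, (T - S) x⟫_𝕜 := by
  rw [LinearMap.sub_apply, inner_sub_right, map_sub]
  ring

theorem re_inner_map_self_le_of_nonneg_sub {T S : E →ₗ[𝕜] E}
    (h : ∀ v : E, 0 ≤ re ⟪v, (T - S) v⟫_𝕜) (x : E) : re ⟪x, S x⟫_𝕜 ≤ re ⟪x, T x⟫_𝕜 := by
  linarith [re_inner_map_self_eq_add_sub T S x, h x]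

theorem mul_norm_sq_le_re_inner_map_self_of_inner_eq_zero {S : E →ₗ[𝕜] E} {χ w : E} {ε : ℝ}
    (hS : ∀ v : E, ‖v‖ = 1 → ⟪χ, v⟫_𝕜 = 0 → ε ≤ re ⟪v, S v⟫_𝕜) (hw : ⟪χ, w⟫_𝕜 = 0) :
    ε * ‖w‖ ^ 2 ≤ re ⟪w, S w⟫_𝕜 := by
  rcases eq_or_ne w 0 with rfl | hw0
  · simp
  have hn : ‖w‖ ≠ 0 := norm_ne_zero_iff.mpr hw0
  have hc : ‖(‖w‖ : 𝕜)⁻¹‖ ^ 2 * ‖w‖ ^ 2 = 1 := by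
    rw [norm_inv, norm_ofReal, abs_norm, ← mul_pow, inv_mul_cancel₀ hn, one_pow]
  have hu : ‖(‖w‖ : 𝕜)⁻¹ • w‖ = 1 := by
    rw [norm_smul, norm_inv, norm_ofReal, abs_norm, inv_mul_cancel₀ hn]
  have huχ : ⟪χ, (‖w‖ : 𝕜)⁻¹ • w⟫_𝕜 = 0 := by rw [inner_smul_right, hw, mul_zero]
  calc ε * ‖w‖ ^ 2 ≤ re ⟪(‖w‖ : 𝕜)⁻¹ • w, S ((‖w‖ : 𝕜)⁻¹ • w)⟫_𝕜 * ‖w‖ ^ 2 := by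
        gcongr
        exact hS _ hu huχ
    _ = re ⟪w, S w⟫_𝕜 := by
      rw [re_inner_smul_map_smul, mul_right_comm, hc, one_mul]

theorem re_inner_map_self_add_of_eigenvector {T : E →ₗ[𝕜] E} (hT : T.IsSymmetric) {x y : E}
    {μ : ℝ} (hx : T x = (μ : 𝕜) • x) (hxy : ⟪x, y⟫_𝕜 = 0) :
    re ⟪x + y, T (x + y)⟫_𝕜 = μ * ‖x‖ ^ 2 + re ⟪y, T y⟫_𝕜 := by
  have hxTy : ⟪x, T y⟫_𝕜 = 0 := by rw [← hT, hx, inner_smul_left, hxy, mul_zero]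
  have hyTx : ⟪y, T x⟫_𝕜 = 0 := by rw [hx, inner_smul_right, inner_eq_zero_symm.mp hxy, mul_zero]
  rw [map_add, inner_add_left, inner_add_right, inner_add_right, hxTy, hyTx,
    ← re_inner_map_self_of_eigenvector hx]
  simp

theorem re_inner_map_self_smul_add_smul_le {T : E →ₗ[𝕜] E} (hT : T.IsSymmetric) {ψ v : E}
    {μ c : ℝ} (hψ : T ψ = (μ : 𝕜) • ψ) (hψv : ⟪ψ, v⟫_𝕜 = 0) (hμc : μ ≤ c)
    (hv : re ⟪v, T v⟫_𝕜 ≤ c * ‖v‖ ^ 2) (a b : 𝕜) :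
    re ⟪a • ψ + b • v, T (a • ψ + b • v)⟫_𝕜 ≤ c * ‖a • ψ + b • v‖ ^ 2 := by
  have haψ : T (a • ψ) = (μ : 𝕜) • (a • ψ) := by rw [map_smul, hψ, smul_comm]
  have horth : ⟪a • ψ, b • v⟫_𝕜 = 0 := by simp [inner_smul_left, inner_smul_right, hψv]
  calc re ⟪a • ψ + b • v, T (a • ψ + b • v)⟫_𝕜
        = μ * ‖a • ψ‖ ^ 2 + ‖b‖ ^ 2 * re ⟪v, T v⟫_𝕜 := by
          rw [re_inner_map_self_add_of_eigenvector hT haψ horth, re_inner_smul_map_smul]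
    _ ≤ c * ‖a • ψ‖ ^ 2 + ‖b‖ ^ 2 * (c * ‖v‖ ^ 2) := by gcongr
    _ = c * ‖a • ψ + b • v‖ ^ 2 := by
          rw [norm_add_sq (𝕜 := 𝕜), horth, map_zero, mul_zero, add_zero, norm_smul b v]
          ring

theorem exists_smul_add_smul_ne_zero_inner_eq_zero (χ : E) {ψ v : E} (hψ : ψ ≠ 0) (hv : v ≠ 0)
    (hψv : ⟪ψ, v⟫_𝕜 = 0) : ∃ a b : 𝕜, a • ψ + b • v ≠ 0 ∧ ⟪χ, a • ψ + b • v⟫_𝕜 = 0 := by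
  by_cases hχv : ⟪χ, v⟫_𝕜 = 0
  · exact ⟨0, 1, by simpa using hv, by simpa using hχv⟩
  refine ⟨⟪χ, v⟫_𝕜, -⟪χ, ψ⟫_𝕜, fun h => ?_, ?_⟩
  · have := congrArg (⟪ψ, ·⟫_𝕜) h
    simp only [inner_add_right, inner_smul_right, hψv, inner_zero_right, mul_zero, add_zero,
      mul_eq_zero, inner_self_eq_zero] at this
    tauto
  · rw [inner_add_right, inner_smul_right, inner_smul_right]
    ring

end

theorem theorem3_abstract_general
    {E : Type*} [NormedAddCommGroup E] [InnerProductSpace ℂ E]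
    (T S : E →ₗ[ℂ] E) (hT : T.IsSymmetric)
    (hV : ∀ v : E, 0 ≤ (⟪v, (T - S) v⟫_ℂ).re)
    (E0 E1 ε0 ε1 VU : ℝ) (ψ χ : E) (hψ : ‖ψ‖ = 1) (hχ : ‖χ‖ = 1)
    (hTψ : T ψ = (E0 : ℂ) • ψ)
    (hTgr : ∀ v : E, E0 * ‖v‖ ^ 2 ≤ (⟪v, T v⟫_ℂ).re)
    (hE1 : IsLeast {r : ℝ | ∃ v : E, ‖v‖ = 1 ∧ ⟪ψ, v⟫_ℂ = 0 ∧ r = (⟪v, T v⟫_ℂ).re} E1)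
    (hSχ : S χ = (ε0 : ℂ) • χ)
    (hSgap : ∀ v : E, ‖v‖ = 1 → ⟪χ, v⟫_ℂ = 0 → ε1 ≤ (⟪v, S v⟫_ℂ).re)
    (hVU : (⟪χ, (T - S) χ⟫_ℂ).re ≤ VU)
    (hVUgap : VU < ε1 - ε0) :
    (ε1 - ε0) - VU ≤ E1 - E0 ∧ E0 < E1 := by
  obtain ⟨v, hv, hψv, rfl⟩ := hE1.1
  have hE0E1 : E0 ≤ (⟪v, T v⟫_ℂ).re := by simpa [hv] using hTgr v
  obtain ⟨a, b, hw, hχw⟩ := exists_smul_add_smul_ne_zero_inner_eq_zero χ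
    (norm_ne_zero_iff.mp (hψ ▸ one_ne_zero)) (norm_ne_zero_iff.mp (hv ▸ one_ne_zero)) hψv
  set w := a • ψ + b • v
  have hε1E1 : ε1 ≤ (⟪v, T v⟫_ℂ).re := by
    refine le_of_mul_le_mul_right ?_ (pow_pos (norm_pos_iff.mpr hw) 2)
    calc ε1 * ‖w‖ ^ 2 ≤ (⟪w, S w⟫_ℂ).re :=
          mul_norm_sq_le_re_inner_map_self_of_inner_eq_zero hSgap hχw
      _ ≤ (⟪w, T w⟫_ℂ).re := re_inner_map_self_le_of_nonneg_sub (T := T) hV w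
      _ ≤ (⟪v, T v⟫_ℂ).re * ‖w‖ ^ 2 :=
          re_inner_map_self_smul_add_smul_le hT hTψ hψv hE0E1 (by simp [hv]) a b
  have hE0 : E0 ≤ ε0 + VU :=
    calc E0 = E0 * ‖χ‖ ^ 2 := by rw [hχ, one_pow, mul_one]
      _ ≤ (⟪χ, T χ⟫_ℂ).re := hTgr χ
      _ = (⟪χ, S χ⟫_ℂ).re + (⟪χ, (T - S) χ⟫_ℂ).re := re_inner_map_self_eq_add_sub T S χ
      _ ≤ ε0 + VU := by
          gcongr
          simpa [hχ] using (re_inner_map_self_of_eigenvector hSχ).le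
  constructor <;> linarith

/-- Abstract content of Theorem 3: if an upper bound `V_U` on the expectation
of the positive perturbation `V = T - S` in the ground state `χ` of `S` is
smaller than the spectral gap `ε1 − ε0` of `S`, then the perturbed Hamiltonian
`T = S + V` has gap at least `(ε1 − ε0) − V_U > 0` above its ground state. -/
theorem theorem3_abstract
    {E : Type*} [NormedAddCommGroup E] [InnerProductSpace ℂ E]
    [FiniteDimensional ℂ E] [Nontrivial E]
    (T S : E →ₗ[ℂ] E) (hT : T.IsSymmetric) (hS : S.IsSymmetric)
    (hV : ∀ v : E, 0 ≤ (⟪v, (T - S) v⟫_ℂ).re)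
    (E0 E1 ε0 ε1 VU : ℝ) (ψ χ : E) (hψ : ‖ψ‖ = 1) (hχ : ‖χ‖ = 1)
    (hTψ : T ψ = (E0 : ℂ) • ψ)
    (hTgr : ∀ v : E, E0 * ‖v‖ ^ 2 ≤ (⟪v, T v⟫_ℂ).re)
    (hE1 : IsLeast {r : ℝ | ∃ v : E, ‖v‖ = 1 ∧ ⟪ψ, v⟫_ℂ = 0 ∧ r = (⟪v, T v⟫_ℂ).re} E1)
    (hSχ : S χ = (ε0 : ℂ) • χ)
    (hSgr : ∀ v : E, ε0 * ‖v‖ ^ 2 ≤ (⟪v, S v⟫_ℂ).re)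
    (hSgap : ∀ v : E, ‖v‖ = 1 → ⟪χ, v⟫_ℂ = 0 → ε1 ≤ (⟪v, S v⟫_ℂ).re)
    (hVU : (⟪χ, (T - S) χ⟫_ℂ).re ≤ VU)
    (hVUgap : VU < ε1 - ε0) :
    (ε1 - ε0) - VU ≤ E1 - E0 ∧ E0 < E1 :=
  theorem3_abstract_general T S hT hV E0 E1 ε0 ε1 VU ψ χ hψ hχ hTψ hTgr hE1 hSχ hSgap hVU hVUgap
end

section
/- Let m be a natural number and λ, w : Fin m → ℝ with w α ≥ 0 for all α and ∑_α (w α)/(1 + (λ α)²) = 1. Then ∑_α 4·(λ α)²/(1 + (λ α)²)² + ∑_α w α·(8·(λ α)⁴/(1 + (λ α)²)³ − 4·(λ α)²/(1 + (λ α)²)²) − (∑_α 2·(w α)·(λ α)²/(1 + (λ α)²)²)² ≤ m + 8. -/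
/-!
Each summand `4λ²/(1+λ²)²` is at most `1` by AM-GM, each `8λ⁴/(1+λ²)³ - 4λ²/(1+λ²)²` is at most
`8/(1+λ²)`, so the weighted sum is at most `8` by the normalization of `w`, and `(Q'(0))² ≥ 0`
is simply dropped.
-/

open Finset

lemma four_mul_div_one_add_sq_le_one (x : ℝ) : 4 * x / (1 + x) ^ 2 ≤ 1 :=
  div_le_one_of_le₀ (by nlinarith [sq_nonneg (1 - x)]) (sq_nonneg _)

lemma eight_mul_pow_four_div_sub_le (t : ℝ) :
    8 * t ^ 4 / (1 + t ^ 2) ^ 3 - 4 * t ^ 2 / (1 + t ^ 2) ^ 2 ≤ 8 / (1 + t ^ 2) := by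
  have hpos : 0 < 1 + t ^ 2 := by positivity
  have hquartic : 8 * t ^ 4 / (1 + t ^ 2) ^ 3 ≤ 8 / (1 + t ^ 2) := by
    rw [div_le_div_iff₀ (by positivity) hpos]
    nlinarith [sq_nonneg t, pow_pos hpos 3]
  have hquadratic : 0 ≤ 4 * t ^ 2 / (1 + t ^ 2) ^ 2 := by positivity
  linarith

lemma sum_four_mul_sq_div_le_card {ι : Type*} [Fintype ι] (l : ι → ℝ) :
    ∑ i, 4 * l i ^ 2 / (1 + l i ^ 2) ^ 2 ≤ (Fintype.card ι : ℝ) := by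
  simpa using sum_le_card_nsmul univ _ 1 fun i _ => four_mul_div_one_add_sq_le_one (l i ^ 2)

lemma sum_weighted_le_eight {ι : Type*} [Fintype ι] (l w : ι → ℝ) (hw : ∀ i, 0 ≤ w i)
    (hnorm : ∑ i, w i / (1 + l i ^ 2) = 1) :
    ∑ i, w i * (8 * l i ^ 4 / (1 + l i ^ 2) ^ 3 - 4 * l i ^ 2 / (1 + l i ^ 2) ^ 2) ≤ 8 :=
  calc ∑ i, w i * (8 * l i ^ 4 / (1 + l i ^ 2) ^ 3 - 4 * l i ^ 2 / (1 + l i ^ 2) ^ 2)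
      ≤ ∑ i, w i * (8 / (1 + l i ^ 2)) :=
        sum_le_sum fun i _ => mul_le_mul_of_nonneg_left (eight_mul_pow_four_div_sub_le _) (hw i)
    _ = 8 * ∑ i, w i / (1 + l i ^ 2) := by
        rw [mul_sum]
        exact sum_congr rfl fun i _ => by ring
    _ = 8 := by rw [hnorm, mul_one]

/-- Odd-parity particle-number variance bound
`F''_{2,−}(0) = F''_{2,+}(0) + Q''(0) − (Q'(0))² ≤ m + 8`: with nonnegative
weights `w` normalized so that `∑_α w_α/(1 + λ_α²) = 1`, the combination of
second-derivative terms is at most `m + 8`. -/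
theorem odd_parity_variance_bound
    (m : ℕ) (l w : Fin m → ℝ)
    (hw : ∀ α, 0 ≤ w α)
    (hnorm : ∑ α, w α / (1 + (l α) ^ 2) = 1) :
    (∑ α, 4 * (l α) ^ 2 / (1 + (l α) ^ 2) ^ 2)
        + (∑ α, w α * (8 * (l α) ^ 4 / (1 + (l α) ^ 2) ^ 3
            - 4 * (l α) ^ 2 / (1 + (l α) ^ 2) ^ 2))
        - (∑ α, 2 * w α * (l α) ^ 2 / (1 + (l α) ^ 2) ^ 2) ^ 2
      ≤ (m : ℝ) + 8 := by
  have hfirst := sum_four_mul_sq_div_le_card l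
  rw [Fintype.card_fin] at hfirst
  have hsecond := sum_weighted_le_eight l w hw hnorm
  linarith [sq_nonneg (∑ α, 2 * w α * (l α) ^ 2 / (1 + (l α) ^ 2) ^ 2)]
end
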